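/- arXiv:2102.01771 — 7 statements merged into one kernel-verified Lean document; each statement's English description precedes it below -/
import Mathlib

section
/- If the pair of random variables (X,Y) is independent of Z, then the Gács–Körner maximal common function of X and (Y,Z) equals the maximal common function of X and Y; that is, mcf(X,(Y,Z)) = mcf(X,Y) (up to equivalence of common functions, i.e., they have equal entropy and each is a function of both arguments). -/
open Real Finset

/-- Probability that random variable `X` takes value `a`, under the distribution `p` on `Ω`. -/
noncomputable def pr {Ω α : Type*} [Fintype Ω] [DecidableEq α]
    (p : Ω → ℝ) (X : Ω → α) (a : α) : ℝ :=
  ∑ ω ∈ Finset.univ.filter (fun ω => X ω = a), p ω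

/-- Shannon entropy (natural log) of a random variable `X` on the finite space `Ω`. -/
noncomputable def ent {Ω α : Type*} [Fintype Ω] [DecidableEq α]
    (p : Ω → ℝ) (X : Ω → α) : ℝ :=
  ∑ a ∈ Finset.univ.image X, Real.negMulLog (pr p X a)

/-- Conditional entropy H(X | Y) = H(X,Y) - H(Y). -/
noncomputable def cent {Ω α β : Type*} [Fintype Ω] [DecidableEq α] [DecidableEq β]
    (p : Ω → ℝ) (X : Ω → α) (Y : Ω → β) : ℝ :=
  ent p (fun ω => (X ω, Y ω)) - ent p Y

/-- `p` is a probability distribution on `Ω`. -/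
def IsProb {Ω : Type*} [Fintype Ω] (p : Ω → ℝ) : Prop :=
  (∀ ω, 0 ≤ p ω) ∧ ∑ ω, p ω = 1

/-- Independence of two random variables under `p`. -/
def IndepRV {Ω α β : Type*} [Fintype Ω] [DecidableEq α] [DecidableEq β]
    (p : Ω → ℝ) (X : Ω → α) (Y : Ω → β) : Prop :=
  ∀ a b, pr p (fun ω => (X ω, Y ω)) (a, b) = pr p X a * pr p Y b

/-- `G` is a common function of `U` and `V`: H(G|U) = H(G|V) = 0. -/
def IsCF {Ω α β γ : Type*} [Fintype Ω] [DecidableEq α] [DecidableEq β] [DecidableEq γ]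
    (p : Ω → ℝ) (U : Ω → α) (V : Ω → β) (G : Ω → γ) : Prop :=
  cent p G U = 0 ∧ cent p G V = 0

/-- `G` is a maximal common function (Gács–Körner) of `U` and `V`:
a common function of maximal entropy among all common functions. -/
def IsMCF {Ω α β γ : Type*} [Fintype Ω] [DecidableEq α] [DecidableEq β] [DecidableEq γ]
    (p : Ω → ℝ) (U : Ω → α) (V : Ω → β) (G : Ω → γ) : Prop :=
  IsCF p U V G ∧ ∀ G' : Ω → ℕ, IsCF p U V G' → ent p G' ≤ ent p G

/-!
A common function `G` of `X` and `(Y, Z)` is already a function of `Y`: if `ω₁, ω₂` lie in the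
support and `Y ω₁ = Y ω₂`, independence of `(X, Y)` and `Z` yields a support point `ω` with
`(X, Y) ω = (X, Y) ω₁` and `Z ω = Z ω₂`, so `G ω₁ = G ω` through `X` and `G ω = G ω₂` through
`(Y, Z)`. Hence `X, Y` and `X, (Y, Z)` have the same common functions and the same maximal
entropy. Throughout, `H(G | U) = 0` is read as "`G` is a function of `U` on the support", by
strict subadditivity of `negMulLog` on the fibres of `U`.
-/

section Probability
variable {Ω α β : Type*} [Fintype Ω] {p : Ω → ℝ}

lemma pr_nonneg [DecidableEq α] (hp : ∀ ω, 0 ≤ p ω) (X : Ω → α) (a : α) : 0 ≤ pr p X a :=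
  Finset.sum_nonneg fun ω _ => hp ω

lemma pr_pos_iff [DecidableEq α] (hp : ∀ ω, 0 ≤ p ω) (X : Ω → α) (a : α) :
    0 < pr p X a ↔ ∃ ω, 0 < p ω ∧ X ω = a := by
  rw [pr, Finset.sum_pos_iff_of_nonneg fun ω _ => hp ω]
  simp [and_comm]

lemma pr_eq_zero_of_notMem_image [DecidableEq α] (X : Ω → α) {a : α}
    (ha : a ∉ Finset.univ.image X) : pr p X a = 0 :=
  Finset.sum_eq_zero fun ω hω =>
    absurd ((Finset.mem_filter.1 hω).2 ▸ Finset.mem_image_of_mem X (Finset.mem_univ ω)) ha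

lemma ent_eq_sum_of_image_subset [DecidableEq α] (X : Ω → α) {s : Finset α}
    (h : Finset.univ.image X ⊆ s) : ent p X = ∑ a ∈ s, negMulLog (pr p X a) :=
  Finset.sum_subset h fun a _ ha => by rw [pr_eq_zero_of_notMem_image X ha, negMulLog_zero]

lemma pr_eq_sum_pr_pair [DecidableEq α] [DecidableEq β] (W : Ω → α) (Y : Ω → β) (y : β) :
    pr p Y y = ∑ w ∈ Finset.univ.image W, pr p (fun ω => (W ω, Y ω)) (w, y) := by
  rw [pr, ← Finset.sum_fiberwise_of_maps_to (g := W) (fun ω _ => Finset.mem_image_of_mem W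
    (Finset.mem_univ ω))]
  refine Finset.sum_congr rfl fun w _ => Finset.sum_congr ?_ fun _ _ => rfl
  ext ω
  simp [Prod.ext_iff, and_comm]

lemma ent_comp [DecidableEq α] [DecidableEq β] (G : Ω → α) {f : α → β}
    (hf : Set.InjOn f (Set.range G)) : ent p (f ∘ G) = ent p G := by
  have hf' : Set.InjOn f (Finset.univ.image G : Finset α) := by simpa using hf
  rw [ent, ent, ← Finset.image_image, Finset.sum_image hf']
  refine Finset.sum_congr rfl fun a ha => congrArg negMulLog <| Finset.sum_congr ?_ fun _ _ => rfl
  ext ω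
  simp only [Finset.mem_filter, Finset.mem_univ, true_and, Function.comp_apply]
  exact ⟨fun h => hf (Set.mem_range_self ω) (by simpa using ha) h, congrArg f⟩

lemma IndepRV.exists_pos_mix [DecidableEq α] [DecidableEq β] (hp : ∀ ω, 0 ≤ p ω)
    {A : Ω → α} {B : Ω → β} (hind : IndepRV p A B) {ω₁ ω₂ : Ω} (h₁ : 0 < p ω₁) (h₂ : 0 < p ω₂) :
    ∃ ω, 0 < p ω ∧ A ω = A ω₁ ∧ B ω = B ω₂ := by
  have hpos : 0 < pr p (fun ω => (A ω, B ω)) (A ω₁, B ω₂) := by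
    rw [hind]
    exact mul_pos ((pr_pos_iff hp A _).2 ⟨ω₁, h₁, rfl⟩) ((pr_pos_iff hp B _).2 ⟨ω₂, h₂, rfl⟩)
  simpa [Prod.ext_iff] using (pr_pos_iff hp _ _).1 hpos

end Probability

section NegMulLog
variable {ι : Type*} {s : Finset ι} {f : ι → ℝ}

lemma neg_mul_log_le_negMulLog {x S : ℝ} (hx : 0 ≤ x) (hxS : x ≤ S) :
    -x * log S ≤ negMulLog x := by
  rcases hx.eq_or_lt with rfl | hx
  · simp
  · have := mul_le_mul_of_nonneg_left (log_le_log hx hxS) hx.le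
    rw [negMulLog]
    linarith

lemma neg_mul_log_lt_negMulLog {x S : ℝ} (hx : 0 < x) (hxS : x < S) :
    -x * log S < negMulLog x := by
  have := mul_lt_mul_of_pos_left (log_lt_log hx hxS) hx
  rw [negMulLog]
  linarith

lemma sum_negMulLog_sub_negMulLog_sum :
    ∑ i ∈ s, negMulLog (f i) - negMulLog (∑ i ∈ s, f i) =
      ∑ i ∈ s, (negMulLog (f i) - -f i * log (∑ j ∈ s, f j)) := by
  rw [Finset.sum_sub_distrib, negMulLog, ← Finset.sum_mul, ← Finset.sum_neg_distrib]

lemma negMulLog_sum_le_sum (hf : ∀ i ∈ s, 0 ≤ f i) :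
    negMulLog (∑ i ∈ s, f i) ≤ ∑ i ∈ s, negMulLog (f i) := by
  rw [← sub_nonneg, sum_negMulLog_sub_negMulLog_sum]
  exact Finset.sum_nonneg fun i hi =>
    sub_nonneg.2 (neg_mul_log_le_negMulLog (hf i hi) (Finset.single_le_sum hf hi))

lemma negMulLog_sum_eq_sum_iff (hf : ∀ i ∈ s, 0 ≤ f i) :
    negMulLog (∑ i ∈ s, f i) = ∑ i ∈ s, negMulLog (f i) ↔
      ∀ i ∈ s, ∀ j ∈ s, 0 < f i → 0 < f j → i = j := by
  have hle : ∀ i ∈ s, f i ≤ ∑ j ∈ s, f j := fun i hi => Finset.single_le_sum hf hi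
  rw [eq_comm, ← sub_eq_zero, sum_negMulLog_sub_negMulLog_sum, Finset.sum_eq_zero_iff_of_nonneg
    fun i hi => sub_nonneg.2 (neg_mul_log_le_negMulLog (hf i hi) (hle i hi))]
  constructor
  · intro h i hi j hj hfi hfj
    by_contra hij
    classical
    have hlt : f i < ∑ k ∈ s, f k := by
      have := Finset.sum_le_sum_of_subset_of_nonneg
        (Finset.insert_subset hi (Finset.singleton_subset_iff.2 hj)) fun k hk _ => hf k hk
      rw [Finset.sum_pair hij] at this
      linarith
    linarith [h i hi, neg_mul_log_lt_negMulLog hfi hlt]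
  · intro h i hi
    rcases (hf i hi).eq_or_lt with hfi | hfi
    · simp [← hfi]
    · have hsum : ∑ j ∈ s, f j = f i := Finset.sum_eq_single_of_mem i hi fun j hj hji =>
        ((hf j hj).eq_or_lt.resolve_right fun hfj => hji (h j hj i hi hfj hfi)).symm
      rw [hsum, negMulLog]
      ring

end NegMulLog

section Determined
variable {Ω α β : Type*} [Fintype Ω] {p : Ω → ℝ}

def DeterminedBy (p : Ω → ℝ) (W : Ω → α) (Y : Ω → β) : Prop :=
  ∀ ω ω', 0 < p ω → 0 < p ω' → Y ω = Y ω' → W ω = W ω'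

lemma cent_eq_sum [DecidableEq α] [DecidableEq β] (W : Ω → α) (Y : Ω → β) :
    cent p W Y = ∑ y ∈ Finset.univ.image Y,
      (∑ w ∈ Finset.univ.image W, negMulLog (pr p (fun ω => (W ω, Y ω)) (w, y)) -
        negMulLog (∑ w ∈ Finset.univ.image W, pr p (fun ω => (W ω, Y ω)) (w, y))) := by
  have hsub : Finset.univ.image (fun ω => (W ω, Y ω)) ⊆
      Finset.univ.image W ×ˢ Finset.univ.image Y := fun x hx => by
    obtain ⟨ω, -, rfl⟩ := Finset.mem_image.1 hx
    simp
  rw [cent, ent_eq_sum_of_image_subset _ hsub, Finset.sum_product, Finset.sum_comm, ent,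
    Finset.sum_sub_distrib]
  simp only [← pr_eq_sum_pr_pair W Y]

lemma cent_eq_zero_iff [DecidableEq α] [DecidableEq β] (hp : ∀ ω, 0 ≤ p ω)
    (W : Ω → α) (Y : Ω → β) : cent p W Y = 0 ↔ DeterminedBy p W Y := by
  have hnn : ∀ w y, 0 ≤ pr p (fun ω => (W ω, Y ω)) (w, y) := fun w y => pr_nonneg hp _ _
  have hpos : ∀ w y, 0 < pr p (fun ω => (W ω, Y ω)) (w, y) ↔
      ∃ ω, 0 < p ω ∧ W ω = w ∧ Y ω = y := fun w y => by
    simp [pr_pos_iff hp, Prod.ext_iff]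
  rw [cent_eq_sum, Finset.sum_eq_zero_iff_of_nonneg fun y _ => sub_nonneg.2 <|
    negMulLog_sum_le_sum fun w _ => hnn w y]
  simp only [sub_eq_zero, eq_comm (a := ∑ w ∈ _, negMulLog _),
    negMulLog_sum_eq_sum_iff fun w _ => hnn w _]
  constructor
  · intro h ω ω' hω hω' hY
    exact h (Y ω) (by simp) (W ω) (by simp) (W ω') (by simp) ((hpos _ _).2 ⟨ω, hω, rfl, rfl⟩)
      ((hpos _ _).2 ⟨ω', hω', rfl, hY.symm⟩)
  · intro h y _ w _ w' _ hw hw'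
    obtain ⟨ω, hω, rfl, rfl⟩ := (hpos w y).1 hw
    obtain ⟨ω', hω', rfl, hY⟩ := (hpos w' _).1 hw'
    exact h ω ω' hω hω' hY.symm

end Determined

section CommonFunction
variable {Ω α β γ δ : Type*} [Fintype Ω] [DecidableEq α] [DecidableEq β] [DecidableEq γ]
  {p : Ω → ℝ}

lemma isCF_iff (hp : ∀ ω, 0 ≤ p ω) {U : Ω → α} {V : Ω → β} {G : Ω → γ} :
    IsCF p U V G ↔ DeterminedBy p G U ∧ DeterminedBy p G V := by
  rw [IsCF, cent_eq_zero_iff hp, cent_eq_zero_iff hp]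

lemma IsCF.comp [DecidableEq δ] (hp : ∀ ω, 0 ≤ p ω) {U : Ω → α} {V : Ω → β} {G : Ω → γ}
    (hG : IsCF p U V G) (f : γ → δ) : IsCF p U V (f ∘ G) := by
  obtain ⟨hU, hV⟩ := (isCF_iff hp).1 hG
  exact (isCF_iff hp).2 ⟨fun ω ω' h h' e => congrArg f (hU ω ω' h h' e),
    fun ω ω' h h' e => congrArg f (hV ω ω' h h' e)⟩

/-- The finite range of `H` relabels injectively into `ℕ`, where `IsMCF` compares entropies. -/
lemma IsMCF.ent_le [DecidableEq δ] (hp : ∀ ω, 0 ≤ p ω) {U : Ω → α} {V : Ω → β} {G : Ω → γ}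
    (hG : IsMCF p U V G) {H : Ω → δ} (hH : IsCF p U V H) : ent p H ≤ ent p G := by
  obtain ⟨e, he⟩ := Set.countable_iff_exists_injOn.1 (Set.finite_range H).countable
  rw [← ent_comp H he]
  exact hG.2 _ (hH.comp hp e)

end CommonFunction

lemma DeterminedBy.of_indep {Ω α β γ δ : Type*} [Fintype Ω] [DecidableEq α] [DecidableEq β]
    [DecidableEq γ] {p : Ω → ℝ} (hp : ∀ ω, 0 ≤ p ω) {X : Ω → α} {Y : Ω → β} {Z : Ω → γ}
    {W : Ω → δ} (hind : IndepRV p (fun ω => (X ω, Y ω)) Z) (hX : DeterminedBy p W X)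
    (hYZ : DeterminedBy p W fun ω => (Y ω, Z ω)) : DeterminedBy p W Y := by
  intro ω₁ ω₂ h₁ h₂ hY
  obtain ⟨ω, hω, hXY, hZ⟩ := hind.exists_pos_mix hp h₁ h₂
  obtain ⟨hXω, hYω⟩ := Prod.ext_iff.1 hXY
  calc W ω₁ = W ω := hX ω₁ ω h₁ hω hXω.symm
    _ = W ω₂ := hYZ ω ω₂ hω h₂ (Prod.ext (hYω.trans hY) hZ)

/-- If (X,Y) is independent of Z, then mcf(X,(Y,Z)) = mcf(X,Y) up to
equivalence: any maximal common function `G` of X and (Y,Z) and any maximal common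
function `G'` of X and Y have equal entropy, and each is a common function of both pairs. -/
theorem mcf_pair_indep {Ω α β γ δ ε : Type*} [Fintype Ω]
    [DecidableEq α] [DecidableEq β] [DecidableEq γ] [DecidableEq δ] [DecidableEq ε]
    (p : Ω → ℝ) (hp : IsProb p)
    (X : Ω → α) (Y : Ω → β) (Z : Ω → γ)
    (hind : IndepRV p (fun ω => (X ω, Y ω)) Z)
    (G : Ω → δ) (G' : Ω → ε)
    (hG : IsMCF p X (fun ω => (Y ω, Z ω)) G)
    (hG' : IsMCF p X Y G') :
    ent p G = ent p G' ∧
    IsCF p X Y G ∧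
    IsCF p X (fun ω => (Y ω, Z ω)) G' := by
  obtain ⟨hp, -⟩ := hp
  obtain ⟨hGX, hGYZ⟩ := (isCF_iff hp).1 hG.1
  obtain ⟨hG'X, hG'Y⟩ := (isCF_iff hp).1 hG'.1
  have hG_cf : IsCF p X Y G := (isCF_iff hp).2 ⟨hGX, hGX.of_indep hp hind hGYZ⟩
  have hG'_cf : IsCF p X (fun ω => (Y ω, Z ω)) G' := (isCF_iff hp).2
    ⟨hG'X, fun ω ω' h h' hYZ => hG'Y ω ω' h h' (congrArg Prod.fst hYZ)⟩
  exact ⟨le_antisymm (hG'.ent_le hp hG_cf) (hG.ent_le hp hG'_cf), hG_cf, hG'_cf⟩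
end

section
/- Schwartz–Zippel lemma: Let P(X_1,…,X_n) be a nonzero polynomial in n variables of total degree at most d with coefficients in a finite field F_q, and let S be a nonempty subset of F_q. If (x_1,…,x_n) is chosen uniformly at random from S^n, then the probability that P(x_1,…,x_n)=0 is at most d/|S|. -/
theorem schwartz_zippel_general {F : Type*} [Field F] [DecidableEq F]
    {n d : ℕ} (P : MvPolynomial (Fin n) F) (hP : P ≠ 0) (hd : P.totalDegree ≤ d)
    (S : Finset F) :
    (((Fintype.piFinset (fun _ : Fin n => S)).filter
        (fun x => MvPolynomial.eval x P = 0)).card : ℝ) / (S.card : ℝ) ^ n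
      ≤ (d : ℝ) / (S.card : ℝ) := by
  have h := NNRat.cast_le (K := ℝ) |>.mpr (MvPolynomial.schwartz_zippel_totalDegree hP S)
  push_cast at h
  exact h.trans (by gcongr)

/-- Schwartz–Zippel: if `P` is a nonzero polynomial in `n` variables over a
finite field `F` of total degree at most `d`, and `S` is a nonempty finite subset of `F`,
then the probability that a uniformly random point of `S^n` is a zero of `P` is at most
`d / |S|`. -/
theorem schwartz_zippel {F : Type*} [Field F] [Fintype F] [DecidableEq F]
    {n d : ℕ} (P : MvPolynomial (Fin n) F) (hP : P ≠ 0) (hd : P.totalDegree ≤ d)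
    (S : Finset F) (hS : S.Nonempty) :
    (((Fintype.piFinset (fun _ : Fin n => S)).filter
        (fun x => MvPolynomial.eval x P = 0)).card : ℝ) / (S.card : ℝ) ^ n
      ≤ (d : ℝ) / (S.card : ℝ) :=
  schwartz_zippel_general P hP hd S
end

section
/- Let M be an s×s matrix whose (k,j) entry is L_j(Y_k), where Y_k = (X_{k1},…,X_{km}) are indeterminates and each L_j is a fixed F_q-linear form in m variables (so row k of M depends only on the indeterminates Y_k, with the same linear forms L_1,…,L_s used in every row). Then det(M) is the zero polynomial in F_q[X_{11},…,X_{sm}] if and only if there exists a nonzero vector λ ∈ F_q^s with M·λ^T = 0 (as an identity of polynomials). -/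
open MvPolynomial Matrix

/-!
If `A λ = 0` then `M λ = 0`, because `(M λ)_k = ∑_i (A λ)_i X_{k,i}`. So if no nonzero `λ`
kills `M`, then `A` has trivial kernel and hence a left inverse `B`; specialising
`X_{k,i} ↦ B_{k,i}` sends `M` to `B A = 1`, so `det M ≠ 0`. The converse holds for any square
matrix over a domain.
-/

theorem Matrix.exists_mul_eq_one_of_mulVec_injective {K : Type*} [Field K] {m n : Type*}
    [Fintype m] [Fintype n] [DecidableEq n] {A : Matrix m n K}
    (hA : Function.Injective A.mulVec) : ∃ B : Matrix n m K, B * A = 1 := by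
  classical
  obtain ⟨g, hg⟩ := A.mulVecLin.exists_leftInverse_of_injective (LinearMap.ker_eq_bot.mpr hA)
  refine ⟨LinearMap.toMatrix' g, ?_⟩
  simpa [LinearMap.toMatrix'_comp, ← toLin'_apply'] using congrArg LinearMap.toMatrix' hg

section LinearFormMatrix

variable {R : Type*} [CommSemiring R] {m n : Type*} [Fintype m]

noncomputable def linearFormMatrix (A : Matrix m n R) : Matrix n n (MvPolynomial (n × m) R) :=
  of fun k j => ∑ i, C (A i j) * X (k, i)

theorem linearFormMatrix_map_eval (A : Matrix m n R) (B : Matrix n m R) :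
    (linearFormMatrix A).map (eval fun p => B p.1 p.2) = B * A := by
  ext k j
  simp [linearFormMatrix, mul_apply, mul_comm]

theorem linearFormMatrix_mulVec [Fintype n] (A : Matrix m n R) (v : n → R) :
    linearFormMatrix A *ᵥ (C ∘ v) = fun k => ∑ i, C ((A *ᵥ v) i) * X (k, i) := by
  ext1 k
  simp only [linearFormMatrix, mulVec, dotProduct, of_apply, Function.comp_apply,
    Finset.sum_mul, map_sum]
  rw [Finset.sum_comm]
  refine Finset.sum_congr rfl fun i _ => Finset.sum_congr rfl fun j _ => ?_
  rw [map_mul]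
  ring

end LinearFormMatrix

section Field

variable {K : Type*} [Field K] {m n : Type*} [Fintype m] [Fintype n] [DecidableEq n]

theorem det_linearFormMatrix_ne_zero {A : Matrix m n K} (hA : Function.Injective A.mulVec) :
    (linearFormMatrix A).det ≠ 0 := by
  obtain ⟨B, hBA⟩ := exists_mul_eq_one_of_mulVec_injective hA
  intro hdet
  have := RingHom.map_det (eval fun p : n × m => B p.1 p.2) (linearFormMatrix A)
  rw [hdet, map_zero, RingHom.mapMatrix_apply, linearFormMatrix_map_eval, hBA, det_one] at this
  exact zero_ne_one this

theorem det_linearFormMatrix_eq_zero_iff (A : Matrix m n K) :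
    (linearFormMatrix A).det = 0 ↔ ∃ v : n → K, v ≠ 0 ∧ linearFormMatrix A *ᵥ (C ∘ v) = 0 := by
  constructor
  · intro hdet
    by_contra! hker
    refine det_linearFormMatrix_ne_zero
      ((injective_iff_map_eq_zero A.mulVecLin).mpr fun v hAv => ?_) hdet
    by_contra hv
    refine hker v hv (funext fun k => ?_)
    simp [linearFormMatrix_mulVec, ← A.mulVecLin_apply, hAv]
  · rintro ⟨v, hv, hMv⟩
    exact exists_mulVec_eq_zero_iff.mp ⟨C ∘ v, by simpa [funext_iff] using hv, hMv⟩

end Field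

theorem det_row_linear_zero_iff_general {F : Type*} [Field F]
    {s m : ℕ}
    (A : Matrix (Fin m) (Fin s) F)
    (M : Matrix (Fin s) (Fin s) (MvPolynomial (Fin s × Fin m) F))
    (hM : ∀ k j, M k j = ∑ i : Fin m, MvPolynomial.C (A i j) * MvPolynomial.X (k, i)) :
    M.det = 0 ↔
      ∃ lam : Fin s → F, lam ≠ 0 ∧
        M.mulVec (fun j => MvPolynomial.C (lam j)) = 0 := by
  obtain rfl : M = linearFormMatrix A := Matrix.ext hM
  exact det_linearFormMatrix_eq_zero_iff A

/-- Let `M` be the s×s matrix of polynomials with `M k j = L_j(Y_k)`, where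
`Y_k = (X_{k,1},…,X_{k,m})` are indeterminates and `L_j(Y_k) = ∑ i, A i j • X_{k,i}` are
fixed linear forms (the same in every row, row `k` using only the variables `Y_k`).
Then `det M` is the zero polynomial iff there is a nonzero vector `λ ∈ F^s` with
`M · λᵀ = 0` as an identity of polynomials. -/
theorem det_row_linear_zero_iff {F : Type*} [Field F] [Fintype F]
    {s m : ℕ} (hs : 0 < s) (hsm : s ≤ m)
    (A : Matrix (Fin m) (Fin s) F)
    (M : Matrix (Fin s) (Fin s) (MvPolynomial (Fin s × Fin m) F))
    (hM : ∀ k j, M k j = ∑ i : Fin m, MvPolynomial.C (A i j) * MvPolynomial.X (k, i)) :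
    M.det = 0 ↔
      ∃ lam : Fin s → F, lam ≠ 0 ∧
        M.mulVec (fun j => MvPolynomial.C (lam j)) = 0 :=
  det_row_linear_zero_iff_general A M hM
end

section
/- Let W be an (m+k) × m matrix over F_q with linearly independent columns, where k, m ≥ 1. If the column span of W does not contain any nonzero scalar multiple of a standard basis vector, then there exists a 1 × (m+k) row vector S with all entries in F_{q^k} \ {0} such that S·W = 0 (viewing the entries of W in the extension field F_{q^k}). -/
/-!
The vectors `v` with `vᵀ W = 0` form a `k`-dimensional space `N` over `F`. No coordinate vanishes
identically on `N`: a functional vanishing on the kernel of `v ↦ vᵀ W` factors through it, so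
`eᵢ` would lie in the column span of `W`. Pairing a basis `b₁, …, b_k` of `N` with `k` vectors
`κ₁, …, κ_k` of `K` that are independent over `F` gives `S = ∑ b_l κ_l`, which annihilates `W`
and whose `i`-th entry `∑ b_l(i) κ_l` is nonzero by the independence of the `κ_l`.
-/

open Module LinearMap Submodule Set Matrix

section LeftKernel

variable {F : Type*} [Field F] {ι n : Type*} [Fintype ι] [Fintype n]

theorem Matrix.finrank_ker_vecMulLinear (A : Matrix ι n F) (hA : LinearIndependent F A.col) :
    finrank F (ker A.vecMulLinear) = Fintype.card ι - Fintype.card n := by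
  have h := finrank_range_add_finrank_ker A.vecMulLinear
  rw [range_vecMulLinear, ← rank_eq_finrank_span_row, rank_eq_finrank_span_cols,
    finrank_span_eq_card hA, finrank_fintype_fun_eq_card] at h
  omega

theorem Matrix.exists_mem_ker_vecMulLinear_apply_ne_zero [DecidableEq ι] (A : Matrix ι n F)
    {i : ι} (hi : Pi.single i 1 ∉ span F (range A.col)) :
    ∃ v ∈ ker A.vecMulLinear, v i ≠ 0 := by
  classical
  by_contra! h
  obtain ⟨ψ, hψ⟩ := (range_dualMap_eq_dualAnnihilator_ker A.vecMulLinear).ge <|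
    (mem_dualAnnihilator (proj i)).2 h
  apply hi
  have hsingle : Pi.single i 1 = A *ᵥ fun j => ψ (Pi.single j 1) := by
    ext l
    have hl := LinearMap.congr_fun hψ (Pi.single l 1)
    rw [dualMap_apply, vecMulLinear_apply, single_one_vecMul, pi_eq_sum_univ' (A.row l)] at hl
    simpa [mulVec, dotProduct, Pi.single_apply, eq_comm] using hl.symm
  rw [hsingle, ← range_mulVecLin]
  exact mem_range_self _

end LeftKernel

theorem Module.Basis.exists_apply_ne_zero_of_mem {R n κ : Type*} [Semiring R]
    {N : Submodule R (n → R)} (b : Basis κ R N) {v : n → R} (hv : v ∈ N) {i : n}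
    (hvi : v i ≠ 0) : ∃ l, (b l : n → R) i ≠ 0 := by
  by_contra! h
  exact hvi (LinearMap.congr_fun (b.ext (f₁ := (proj i).comp N.subtype) (f₂ := 0) h) ⟨v, hv⟩)

theorem LinearIndependent.sum_smul_ne_zero {R M ι : Type*} [Ring R] [AddCommGroup M] [Module R M]
    [Fintype ι] {v : ι → M} (hv : LinearIndependent R v) {c : ι → R} (hc : ∃ l, c l ≠ 0) :
    ∑ l, c l • v l ≠ 0 := fun h0 =>
  let ⟨l, hl⟩ := hc
  hl (Fintype.linearIndependent_iff.1 hv c h0 l)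

theorem vecMul_map_algebraMap_sum_smul_eq_zero {F K ι n m : Type*} [CommSemiring F]
    [CommSemiring K] [Algebra F K] [Fintype ι] [Fintype n] (W : Matrix n m F) (b : ι → n → F)
    (hb : ∀ l, b l ᵥ* W = 0) (κ : ι → K) :
    (fun i => ∑ l, b l i • κ l) ᵥ* W.map (algebraMap F K) = 0 := by
  have hS : (fun i => ∑ l, b l i • κ l) = ∑ l, κ l • (algebraMap F K ∘ b l) := by
    ext i
    simp [Algebra.smul_def, mul_comm]
  ext j
  simp [hS, sum_vecMul, smul_vecMul, ← RingHom.map_vecMul, hb]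

theorem exists_nonzero_annihilator_general {F K : Type*} [Field F]
    [Field K] [Algebra F K]
    {m k : ℕ}
    (hdim : Module.finrank F K = k)
    (W : Matrix (Fin (m + k)) (Fin m) F)
    (hrank : LinearIndependent F W.transpose)
    (hstd : ¬ ∃ (i : Fin (m + k)) (c : F), c ≠ 0 ∧
        (c • (Pi.single i 1 : Fin (m + k) → F)) ∈ Submodule.span F (Set.range W.transpose)) :
    ∃ S : Fin (m + k) → K, (∀ i, S i ≠ 0) ∧
      ∀ j : Fin m, ∑ i : Fin (m + k), S i * algebraMap F K (W i j) = 0 := by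
  obtain ⟨κ, hκ⟩ := exists_linearIndependent_of_le_finrank hdim.ge
  have hN : finrank F (ker W.vecMulLinear) = k := by
    rw [W.finrank_ker_vecMulLinear hrank]
    simp
  let b := finBasisOfFinrankEq F _ hN
  refine ⟨fun i => ∑ l, (b l : Fin (m + k) → F) i • κ l, fun i => ?_, fun j =>
    congrFun (vecMul_map_algebraMap_sum_smul_eq_zero W _ (fun l => (b l).2) κ) j⟩
  obtain ⟨v, hv, hvi⟩ := W.exists_mem_ker_vecMulLinear_apply_ne_zero (i := i) fun h =>
    hstd ⟨i, 1, one_ne_zero, by rwa [one_smul]⟩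
  exact hκ.sum_smul_ne_zero (b.exists_apply_ne_zero_of_mem hv hvi)

/-- Let `W` be an `(m+k) × m` matrix over `F = F_q` with linearly independent
columns, `k, m ≥ 1`. If the column span of `W` contains no nonzero scalar multiple of a
standard basis vector, then there is a row vector `S` of length `m+k` with all entries in
`K \ {0}`, where `K = F_{q^k}` is the degree-`k` extension of `F`, such that `S·W = 0`
(entries of `W` viewed in `K`). -/
theorem exists_nonzero_annihilator {F K : Type*} [Field F] [Fintype F]
    [Field K] [Fintype K] [Algebra F K]
    {m k : ℕ} (hm : 1 ≤ m) (hk : 1 ≤ k)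
    (hdim : Module.finrank F K = k)
    (W : Matrix (Fin (m + k)) (Fin m) F)
    (hrank : LinearIndependent F W.transpose)
    (hstd : ¬ ∃ (i : Fin (m + k)) (c : F), c ≠ 0 ∧
        (c • (Pi.single i 1 : Fin (m + k) → F)) ∈ Submodule.span F (Set.range W.transpose)) :
    ∃ S : Fin (m + k) → K, (∀ i, S i ≠ 0) ∧
      ∀ j : Fin m, ∑ i : Fin (m + k), S i * algebraMap F K (W i j) = 0 :=
  exists_nonzero_annihilator_general hdim W hrank hstd
end

section
/- Let W be a (Σ_{e∈E} n_e) × n_w full-column-rank matrix over a field F partitioned into blocks of n_e rows (e ∈ E), let s = min_e n_e, and suppose n_w ≤ Σ_e n_e − s. For a generic s × (Σ_e n_e) matrix S (whose entries are linear forms over F in sm free indeterminates parametrizing the solution space of S·W = 0, where m = Σ_e n_e − n_w), write S = (S_e, T_e)_{e∈E} with S_e the s×s submatrix formed by the first s columns of block e. If W is irreducible, then the polynomial Π_{e∈E} det(S_e), in the sm indeterminates, is not identically zero. -/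
open MvPolynomial

open Matrix Module

/-! Fix a block `e` and let `p` pick its first `s` coordinates. Restricting the left kernel
`{v | v ᵥ* W = 0}` to the coordinates `p` is onto: otherwise a nonzero functional `φ` kills the
image, so `φ ∘ (· ∘ p)` kills the left kernel and is therefore given by a vector of the column
space of `W`; that vector is nonzero and supported in block `e`, against irreducibility.
Hence some scalar solution `S₀` of `S₀ * W = 0` has `S₀_e = 1`. Specializing the generic `S`
to `S₀` sends `det S_e` to `1`, so no factor of the product vanishes. -/

namespace Matrix

variable {F ι κ : Type*} [Field F] [Fintype ι]

theorem coeffs_mem_span_range_transpose_of_ker_vecMulLinear_le [DecidableEq ι] [Fintype κ]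
    {W : Matrix ι κ F} {g : Dual F (ι → F)}
    (hg : LinearMap.ker W.vecMulLinear ≤ LinearMap.ker g) :
    (fun j => g (Pi.single j 1)) ∈ Submodule.span F (Set.range Wᵀ) := by
  classical
  obtain ⟨f, rfl⟩ : g ∈ LinearMap.range W.vecMulLinear.dualMap := by
    rw [LinearMap.range_dualMap_eq_dualAnnihilator_ker, Submodule.mem_dualAnnihilator]
    exact fun v hv => hg hv
  change _ ∈ Submodule.span F (Set.range W.col)
  rw [← Matrix.range_mulVecLin]
  refine ⟨fun c => f (Pi.single c 1), funext fun j => ?_⟩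
  simp only [mulVecLin_apply, LinearMap.dualMap_apply, vecMulLinear_apply, single_one_vecMul]
  conv_rhs => rw [pi_eq_sum_univ' (W.row j)]
  simp [mulVec, dotProduct]

theorem exists_vecMul_eq_zero_and_comp_eq [Fintype κ] {α : Type*} [Finite α]
    {W : Matrix ι κ F} {p : α → ι} (hp : Function.Injective p)
    (hW : ∀ u ∈ Submodule.span F (Set.range Wᵀ), (∀ j ∉ Set.range p, u j = 0) → u = 0)
    (x : α → F) : ∃ v, v ᵥ* W = 0 ∧ v ∘ p = x := by
  classical
  let π : (ι → F) →ₗ[F] α → F := LinearMap.funLeft F F p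
  let K := LinearMap.ker W.vecMulLinear
  suffices K.map π = ⊤ by
    obtain ⟨v, hv, rfl⟩ : x ∈ K.map π := this ▸ Submodule.mem_top
    exact ⟨v, hv, rfl⟩
  by_contra hne
  obtain ⟨φ, hφ, hφK⟩ :=
    Submodule.exists_dual_map_eq_bot_of_lt_top (lt_top_iff_ne_top.mpr hne) inferInstance
  have hπ_single_mem (a : α) : π (Pi.single (p a) 1) = Pi.single a 1 :=
    Function.update_comp_eq_of_injective (0 : ι → F) hp a 1
  have hπ_single_not_mem (j : ι) (hj : j ∉ Set.range p) : π (Pi.single j 1) = 0 := by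
    ext a
    simp only [π, LinearMap.funLeft_apply, Pi.single_apply, Pi.zero_apply]
    exact if_neg fun h => hj ⟨a, h⟩
  have hu := coeffs_mem_span_range_transpose_of_ker_vecMulLinear_le (g := φ ∘ₗ π)
    fun v hv => by
      have := Submodule.mem_map_of_mem (f := φ) (Submodule.mem_map_of_mem (f := π) hv)
      rwa [hφK, Submodule.mem_bot] at this
  have hu0 := hW _ hu fun j hj => by simp [hπ_single_not_mem j hj]
  exact hφ <| (Pi.basisFun F α).ext fun a => by
    simpa [hπ_single_mem] using congrFun hu0 (p a)

theorem exists_mul_eq_zero_and_submatrix_eq_one [Fintype κ] {α : Type*} [Finite α]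
    [DecidableEq α] {W : Matrix ι κ F} {p : α → ι} (hp : Function.Injective p)
    (hW : ∀ u ∈ Submodule.span F (Set.range Wᵀ), (∀ j ∉ Set.range p, u j = 0) → u = 0) :
    ∃ S₀ : Matrix α ι F, S₀ * W = 0 ∧ S₀.submatrix id p = 1 := by
  choose v hvW hvp using fun a => exists_vecMul_eq_zero_and_comp_eq hp hW (Pi.single a 1)
  refine ⟨of v, ?_, ?_⟩
  · ext a c
    exact congrFun (hvW a) c
  · ext a b
    simpa [one_apply, Pi.single_apply, eq_comm] using congrFun (hvp a) b

end Matrix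

theorem prod_det_ne_zero_of_irreducible_general {F E : Type*} [Field F]
    [Fintype E]
    {nw : ℕ} (n : E → ℕ)
    (s : ℕ)
    (hse : ∀ e, s ≤ n e)
    (m : ℕ)
    (W : Matrix ((e : E) × Fin (n e)) (Fin nw) F)
    (hirr : ¬ ∃ (e : E) (v : ((e' : E) × Fin (n e')) → F),
        v ≠ 0 ∧ (∀ j : (e' : E) × Fin (n e'), j.1 ≠ e → v j = 0) ∧
        v ∈ Submodule.span F (Set.range W.transpose))
    (S : Matrix (Fin s) ((e : E) × Fin (n e)) (MvPolynomial (Fin s × Fin m) F))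
    (hsurj : ∀ S₀ : Matrix (Fin s) ((e : E) × Fin (n e)) F, S₀ * W = 0 →
        ∃ t : Fin s × Fin m → F, ∀ k j, MvPolynomial.eval t (S k j) = S₀ k j) :
    (∏ e : E, Matrix.det (fun a b : Fin s => S a ⟨e, Fin.castLE (hse e) b⟩)) ≠ 0 := by
  refine Finset.prod_ne_zero_iff.mpr fun e _ => ?_
  let p : Fin s → (e : E) × Fin (n e) := Sigma.mk e ∘ Fin.castLE (hse e)
  have hp : Function.Injective p := sigma_mk_injective.comp (Fin.castLE_injective (hse e))
  have hW : ∀ u ∈ Submodule.span F (Set.range Wᵀ), (∀ j ∉ Set.range p, u j = 0) → u = 0 :=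
    fun u hu hsupp => by_contra fun hu0 => hirr ⟨e, u, hu0, fun j hj =>
      hsupp j (by rintro ⟨b, rfl⟩; exact hj rfl), hu⟩
  obtain ⟨S₀, hS₀W, hS₀p⟩ := exists_mul_eq_zero_and_submatrix_eq_one hp hW
  obtain ⟨t, ht⟩ := hsurj S₀ hS₀W
  have heval : (S.submatrix id p).map (eval t) = 1 := by
    rw [← hS₀p]
    ext a b
    exact ht a (p b)
  have hdet : eval t (S.submatrix id p).det = 1 := by
    rw [RingHom.map_det, RingHom.mapMatrix_apply, heval, det_one]
  change (S.submatrix id p).det ≠ 0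
  exact fun h => by simp [h] at hdet

/-- Let `W` be a full-column-rank `(Σ_e n_e) × n_w` matrix over `F_q`,
row-partitioned into blocks of `n_e` rows, with `s = min_e n_e` and
`n_w ≤ Σ_e n_e − s`, `m = Σ_e n_e − n_w`. Let `S` be the generic s×(Σ_e n_e) matrix
whose entries are linear forms (row `k` using only the `m` free indeterminates of row
`k`) parametrizing the solution space of `S·W = 0` (every scalar solution is a
specialization). If `W` is irreducible, then the polynomial `Π_e det(S_e)` — where
`S_e` is the s×s submatrix formed by the first `s` columns of block `e` — is not
identically zero. -/
theorem prod_det_ne_zero_of_irreducible {F E : Type*} [Field F] [Fintype F]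
    [Fintype E] [Nonempty E] [DecidableEq E]
    {nw : ℕ} (n : E → ℕ) (hn : ∀ e, 0 < n e)
    (s : ℕ) (hs : s = Finset.univ.inf' Finset.univ_nonempty n)
    (hse : ∀ e, s ≤ n e)
    (m : ℕ) (hm : m = (∑ e : E, n e) - nw)
    (W : Matrix ((e : E) × Fin (n e)) (Fin nw) F)
    (hrank : LinearIndependent F W.transpose)
    (hnw : nw ≤ (∑ e : E, n e) - s)
    (hirr : ¬ ∃ (e : E) (v : ((e' : E) × Fin (n e')) → F),
        v ≠ 0 ∧ (∀ j : (e' : E) × Fin (n e'), j.1 ≠ e → v j = 0) ∧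
        v ∈ Submodule.span F (Set.range W.transpose))
    (S : Matrix (Fin s) ((e : E) × Fin (n e)) (MvPolynomial (Fin s × Fin m) F))
    (c : Fin s → ((e : E) × Fin (n e)) → Fin m → F)
    (hlin : ∀ k j, S k j = ∑ i : Fin m, MvPolynomial.C (c k j i) * MvPolynomial.X (k, i))
    (hsol : S * W.map (MvPolynomial.C : F → MvPolynomial (Fin s × Fin m) F) = 0)
    (hsurj : ∀ S₀ : Matrix (Fin s) ((e : E) × Fin (n e)) F, S₀ * W = 0 →
        ∃ t : Fin s × Fin m → F, ∀ k j, MvPolynomial.eval t (S k j) = S₀ k j) :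
    (∏ e : E, Matrix.det (fun a b : Fin s => S a ⟨e, Fin.castLE (hse e) b⟩)) ≠ 0 :=
  prod_det_ne_zero_of_irreducible_general n s hse m W hirr S hsurj
end

section
/- Under the hypotheses of the previous setting (W irreducible, full column rank, n_w ≤ Σ_e n_e − s), if n > log_q(s·|E|), then there exists a matrix S over F_{q^n} with S·W = 0 (entries of W viewed in F_{q^n}) such that every block S_e (the s×s submatrix of the first s columns of block e) is invertible. -/
/-!
Let `V` be the left kernel of `W` over `K`. For each block `e`, restricting vectors of `V` to the
first `s` coordinates of block `e` maps `V` onto `K^s`: otherwise a nonzero functional vanishing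
on the image, extended by zero, lies in the column space of `W` over `K`, and an `F`-linear
coordinate of it is a nonzero vector of the `F`-column span of `W` supported on block `e`.
For `s > 0` we have `|E| < |K|`, and then finitely many proper subspaces of `V` indexed by `E`
never cover `V`, so the rows of `S` can be chosen in `V` one at a time keeping, for every `e`,
their block-`e` restrictions linearly independent.
-/

open Matrix Module Function

section DotProduct

variable {K m ι : Type*} [Fintype m]

theorem dotProduct_extend_zero [NonUnitalNonAssocSemiring K] [Fintype ι] {g : ι → m}
    (hg : Injective g) (v : m → K) (w : ι → K) : v ⬝ᵥ extend g w 0 = (v ∘ g) ⬝ᵥ w := by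
  classical
  calc ∑ i, v i * extend g w 0 i = ∑ i ∈ Finset.univ.map ⟨g, hg⟩, v i * extend g w 0 i :=
        (Finset.sum_subset (Finset.subset_univ _) fun i _ hi => by
          rw [extend_apply' _ _ _ (by simpa using hi), Pi.zero_apply, mul_zero]).symm
    _ = ∑ b, v (g b) * w b := by simp [hg.extend_apply]

theorem exists_dotProduct_ne_zero_of_notMem [Field K] {U : Submodule K (m → K)} {u : m → K}
    (hu : u ∉ U) : ∃ w : m → K, (∀ x ∈ U, w ⬝ᵥ x = 0) ∧ w ⬝ᵥ u ≠ 0 := by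
  classical
  obtain ⟨f, hfu, hfU⟩ := Submodule.exists_dual_map_eq_bot_of_notMem hu inferInstance
  refine ⟨(dotProductEquiv K m).symm f, fun x hx => ?_, ?_⟩
  · rw [← dotProductEquiv_apply_apply, LinearEquiv.apply_symm_apply]
    have hfx := Submodule.mem_map_of_mem (f := f) hx
    rwa [hfU, Submodule.mem_bot] at hfx
  · rwa [← dotProductEquiv_apply_apply, LinearEquiv.apply_symm_apply]

end DotProduct

section LeftKernel

variable {K m n ι : Type*} [Field K] [Fintype m] [Fintype n]

theorem Matrix.mem_range_mulVecLin_of_forall_vecMul_eq_zero (A : Matrix m n K) {u : m → K}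
    (h : ∀ w, w ᵥ* A = 0 → w ⬝ᵥ u = 0) : u ∈ LinearMap.range A.mulVecLin := by
  by_contra hu
  obtain ⟨w, hwA, hwu⟩ := exists_dotProduct_ne_zero_of_notMem hu
  refine hwu (h w (dotProduct_eq_zero _ fun x => ?_))
  rw [← dotProduct_mulVec]
  exact hwA _ ⟨x, rfl⟩

theorem Matrix.surjective_funLeft_comp_ker_vecMulLinear [Fintype ι] (A : Matrix m n K)
    {g : ι → m} (hg : Injective g)
    (hA : ∀ u ∈ LinearMap.range A.mulVecLin, (∀ i ∉ Set.range g, u i = 0) → u = 0) :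
    Surjective (LinearMap.funLeft K K g ∘ₗ (LinearMap.ker A.vecMulLinear).subtype) := by
  rw [← LinearMap.range_eq_top, Submodule.eq_top_iff']
  by_contra! ⟨c, hc⟩
  obtain ⟨w, hw, hwc⟩ := exists_dotProduct_ne_zero_of_notMem hc
  have hmem : extend g w 0 ∈ LinearMap.range A.mulVecLin := by
    refine A.mem_range_mulVecLin_of_forall_vecMul_eq_zero fun v hv => ?_
    rw [dotProduct_extend_zero hg, dotProduct_comm]
    exact hw _ ⟨⟨v, by simpa using hv⟩, rfl⟩
  have hzero := hA _ hmem fun i hi => by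
    rw [extend_apply' _ _ _ (by simpa using hi), Pi.zero_apply]
  refine hwc ?_
  have : w = 0 := funext fun b => by
    simpa [hg.extend_apply] using congrFun hzero (g b)
  simp [this]

end LeftKernel

theorem Matrix.map_algebraMap_mulVec_comp {F K m n : Type*} [CommSemiring F] [Semiring K]
    [Algebra F K] [Fintype n] (A : Matrix m n F) (φ : K →ₗ[F] F) (x : n → K) :
    φ ∘ (A.map (algebraMap F K) *ᵥ x) = A *ᵥ (φ ∘ x) := by
  ext i
  simp [mulVec, dotProduct, ← Algebra.smul_def]

theorem Matrix.exists_mem_range_mulVecLin_of_map_algebraMap {F K m n : Type*} [Field F]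
    [Field K] [Algebra F K] [Fintype n] (A : Matrix m n F) {u : m → K}
    (hu : u ∈ LinearMap.range (A.map (algebraMap F K)).mulVecLin) {i₀ : m} (hi₀ : u i₀ ≠ 0) :
    ∃ v ∈ LinearMap.range A.mulVecLin, v i₀ ≠ 0 ∧ ∀ i, u i = 0 → v i = 0 := by
  obtain ⟨x, rfl⟩ := hu
  obtain ⟨φ, hφ⟩ := Projective.exists_dual_ne_zero F hi₀
  refine ⟨φ ∘ _, ⟨φ ∘ x, (A.map_algebraMap_mulVec_comp φ x).symm⟩, hφ, fun i hi => ?_⟩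
  rw [mulVecLin_apply] at hi
  simp [hi]

theorem exists_linearIndependent_comp_of_surjective {K V M E : Type*} [Field K]
    [AddCommGroup V] [Module K V] [AddCommGroup M] [Module K M] [FiniteDimensional K M]
    [Fintype E] (P : E → V →ₗ[K] M) (hP : ∀ e, Surjective (P e))
    (hcard : (Fintype.card E : ℕ∞) < ENat.card K) {k : ℕ} (hk : k ≤ finrank K M) :
    ∃ x : Fin k → V, ∀ e, LinearIndependent K (P e ∘ x) := by
  induction k with
  | zero => exact ⟨Fin.elim0, fun e => linearIndependent_empty_type⟩
  | succ k ih =>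
    obtain ⟨x, hx⟩ := ih (by omega)
    have hproper : ∀ e, (Submodule.span K (Set.range (P e ∘ x))).comap (P e) ≠ ⊤ := by
      intro e htop
      have hspan : Submodule.span K (Set.range (P e ∘ x)) = ⊤ := by
        rw [← Submodule.map_comap_eq_of_surjective (hP e) (Submodule.span K _), htop,
          Submodule.map_top, LinearMap.range_eq_top.mpr (hP e)]
      have := finrank_range_le_card (R := K) (P e ∘ x)
      rw [Set.finrank, hspan, finrank_top, Fintype.card_fin] at this
      omega
    obtain ⟨v, -, hv⟩ := Set.exists_of_ssubset
      (Submodule.iUnion_ssubset_of_forall_ne_top_of_card_lt Finset.univ _ hproper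
        (by simpa using hcard))
    simp only [Finset.mem_univ, Set.iUnion_true, Set.mem_iUnion, SetLike.mem_coe,
      Submodule.mem_comap, not_exists] at hv
    exact ⟨Fin.snoc x v, fun e => by
      rw [Fin.comp_snoc]; exact linearIndependent_finSnoc.mpr ⟨hx e, hv e⟩⟩

theorem exists_invertible_blocks_annihilator_general {F K E : Type*} [Field F]
    [Field K] [Fintype K] [Algebra F K]
    [Fintype E]
    {nw : ℕ} (n : E → ℕ)
    (s : ℕ)
    (hse : ∀ e, s ≤ n e)
    (W : Matrix ((e : E) × Fin (n e)) (Fin nw) F)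
    (hirr : ¬ ∃ (e : E) (v : ((e' : E) × Fin (n e')) → F),
        v ≠ 0 ∧ (∀ j : (e' : E) × Fin (n e'), j.1 ≠ e → v j = 0) ∧
        v ∈ Submodule.span F (Set.range W.transpose))
    (hcard : s * Fintype.card E < Fintype.card K) :
    ∃ S : Matrix (Fin s) ((e : E) × Fin (n e)) K,
      S * W.map (algebraMap F K) = 0 ∧
      ∀ e : E, IsUnit (Matrix.det (fun a b : Fin s => S a ⟨e, Fin.castLE (hse e) b⟩)) := by
  rcases Nat.eq_zero_or_pos s with rfl | hs_pos
  · exact ⟨0, Matrix.zero_mul _, fun e => det_fin_zero (R := K) ▸ isUnit_one⟩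
  have hcardE : (Fintype.card E : ℕ∞) < ENat.card K := by
    rw [ENat.card_eq_coe_fintype_card, Nat.cast_lt]
    exact (Nat.le_mul_of_pos_left _ hs_pos).trans_lt hcard
  set W' := W.map (algebraMap F K)
  let g : (e : E) → Fin s → (e : E) × Fin (n e) := fun e b => ⟨e, Fin.castLE (hse e) b⟩
  have hg : ∀ e, Injective (g e) := fun e b b' h =>
    Fin.castLE_injective (hse e) (eq_of_heq (Sigma.mk.inj_iff.mp h).2)
  have hirrK : ∀ e, ∀ u ∈ LinearMap.range W'.mulVecLin, (∀ i ∉ Set.range (g e), u i = 0) →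
      u = 0 := by
    intro e u hu hsupp
    by_contra hne
    obtain ⟨i₀, hi₀⟩ := Function.ne_iff.mp hne
    obtain ⟨v, hvW, hvi₀, hvu⟩ := W.exists_mem_range_mulVecLin_of_map_algebraMap hu hi₀
    refine hirr ⟨e, v, fun h => hvi₀ (congrFun h i₀), fun j hj => hvu j (hsupp j ?_), ?_⟩
    · rintro ⟨b, rfl⟩
      exact hj rfl
    · rwa [range_mulVecLin] at hvW
  obtain ⟨x, hx⟩ := exists_linearIndependent_comp_of_surjective
    (fun e => LinearMap.funLeft K K (g e) ∘ₗ (LinearMap.ker W'.vecMulLinear).subtype)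
    (fun e => W'.surjective_funLeft_comp_ker_vecMulLinear (hg e) (hirrK e)) hcardE (k := s) (by simp)
  refine ⟨Matrix.of fun a => x a, ?_, fun e => ?_⟩
  · ext a j
    exact congrFun (LinearMap.mem_ker.mp (x a).2) j
  · exact (isUnit_iff_isUnit_det _).mp (linearIndependent_rows_iff_isUnit.mp (hx e))

/-- With `W` a full-column-rank irreducible `(Σ_e n_e) × n_w` matrix over
`F_q` (column span contains no nonzero single-block-supported vector) and
`n_w ≤ Σ_e n_e − s`, `s = min_e n_e`, if `K = F_{q^n}` with `q^n > s·|E|`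
(i.e. `n > log_q(s|E|)`), then there exists an s×(Σ_e n_e) matrix `S` over `K` with
`S·W = 0` (entries of `W` viewed in `K`) such that every block `S_e` — the s×s
submatrix of the first `s` columns of block `e` — is invertible. -/
theorem exists_invertible_blocks_annihilator {F K E : Type*} [Field F] [Fintype F]
    [Field K] [Fintype K] [Algebra F K]
    [Fintype E] [Nonempty E] [DecidableEq E]
    {nw : ℕ} (n : E → ℕ) (hn : ∀ e, 0 < n e)
    (s : ℕ) (hs : s = Finset.univ.inf' Finset.univ_nonempty n)
    (hse : ∀ e, s ≤ n e)
    (W : Matrix ((e : E) × Fin (n e)) (Fin nw) F)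
    (hrank : LinearIndependent F W.transpose)
    (hnw : nw ≤ (∑ e : E, n e) - s)
    (hirr : ¬ ∃ (e : E) (v : ((e' : E) × Fin (n e')) → F),
        v ≠ 0 ∧ (∀ j : (e' : E) × Fin (n e'), j.1 ≠ e → v j = 0) ∧
        v ∈ Submodule.span F (Set.range W.transpose))
    (hcard : s * Fintype.card E < Fintype.card K) :
    ∃ S : Matrix (Fin s) ((e : E) × Fin (n e)) K,
      S * W.map (algebraMap F K) = 0 ∧
      ∀ e : E, IsUnit (Matrix.det (fun a b : Fin s => S a ⟨e, Fin.castLE (hse e) b⟩)) :=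
  exists_invertible_blocks_annihilator_general n s hse W hirr hcard
end

section
/- Tree-PIN alignment construction: Let T be a tree with root leaf ρ, edges E, and for each non-root-incident edge e let e^# be the adjacent edge on the unique path from e toward ρ, and i*(e) the endpoint of e closer to ρ. Given invertible s×s matrices (A_{i,e}) for internal nodes i and edges e ∈ E_i \ {e*(i)}, define S_{e(ρ)} = S_1 (any invertible matrix) for the root edge and S_e = −S_{e^#} A_{i*(e),e}^{−1} recursively. Then the row-block vector S = (S_e)_{e∈E} satisfies S·F = 0, where F is the tree communication matrix whose column blocks, one per internal node i and edge e ∈ E_i \ {e*(i)}, have identity in row-block e*(i), A_{i,e} in row-block e, and zeros elsewhere; moreover each S_e is invertible. -/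
/-!
The column block of `S · F` belonging to a non-root edge `e` is `S_{e^#} + S_e A_e`, and the
recursion `S_e = -S_{e^#} A_e⁻¹` is exactly the vanishing of this block. Invertibility of the
`S_e` propagates from the root edge along the same recursion, since every edge reaches the
root under iteration of `e ↦ e^#`; the same fact shows `e^# ≠ e`, so the two nonzero blocks
of each column sit in different row blocks.
-/

theorem Function.forall_of_iterate_eq {α : Type*} {f : α → α} {a₀ : α}
    (hreach : ∀ x, ∃ k, f^[k] x = a₀) {P : α → Prop} (h₀ : P a₀)
    (hstep : ∀ x, x ≠ a₀ → P (f x) → P x) (x : α) : P x := by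
  obtain ⟨k, hk⟩ := hreach x
  induction k generalizing x with
  | zero => exact (Function.iterate_zero_apply f x ▸ hk) ▸ h₀
  | succ k ih =>
    by_cases hx : x = a₀
    · exact hx ▸ h₀
    · exact hstep x hx (ih (f x) hk)

theorem Function.apply_ne_of_iterate_eq {α : Type*} {f : α → α} {x a₀ : α} {k : ℕ}
    (hk : f^[k] x = a₀) (hx : x ≠ a₀) : f x ≠ x :=
  fun hfix => hx (Function.iterate_fixed hfix k ▸ hk)

theorem Matrix.mul_apply_prod_of_blocks {m n l ι κ R : Type*} [Fintype n] [Fintype ι]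
    [NonUnitalNonAssocSemiring R] {M : Matrix m (ι × n) R} {N : Matrix (ι × n) (κ × l) R}
    {S : ι → Matrix m n R} {G : κ → ι → Matrix n l R}
    (hM : ∀ a f c, M a (f, c) = S f a c) (hN : ∀ f c j b, N (f, c) (j, b) = G j f c b)
    (a : m) (j : κ) (b : l) : (M * N) a (j, b) = (∑ f, S f * G j f) a b := by
  simp only [Matrix.mul_apply, Fintype.sum_prod_type, Matrix.sum_apply, hM, hN]

theorem Finset.sum_mul_ite_ite_eq {ι R : Type*} [Fintype ι] [DecidableEq ι] [NonAssocSemiring R]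
    (S : ι → R) {p q : ι} (hpq : p ≠ q) (B : R) :
    ∑ f, S f * (if f = p then 1 else if f = q then B else 0) = S p + S q * B := by
  rw [Fintype.sum_eq_add p q hpq]
  · simp [hpq.symm]
  · intro f hf
    simp [hf.1, hf.2]

theorem tree_pin_alignment_general {F : Type*} [Field F] {s : ℕ} {E : Type*}
    [Fintype E] [DecidableEq E]
    (e₀ : E) (par : E → E)
    (htree : ∀ e : E, ∃ k : ℕ, par^[k] e = e₀)
    (A : E → Matrix (Fin s) (Fin s) F) (hA : ∀ e, IsUnit (A e))
    (S1 : Matrix (Fin s) (Fin s) F) (hS1 : IsUnit S1)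
    (S : E → Matrix (Fin s) (Fin s) F)
    (hS0 : S e₀ = S1)
    (hSrec : ∀ e : E, e ≠ e₀ → S e = -(S (par e) * (A e)⁻¹))
    (Fm : Matrix (E × Fin s) ({e : E // e ≠ e₀} × Fin s) F)
    (hFm : ∀ (f : E) (a : Fin s) (e : {e : E // e ≠ e₀}) (b : Fin s),
      Fm (f, a) (e, b) =
        if f = par e.1 then (if a = b then 1 else 0)
        else if f = e.1 then A e.1 a b else 0)
    (Sm : Matrix (Fin s) (E × Fin s) F)
    (hSm : ∀ (a : Fin s) (e : E) (b : Fin s), Sm a (e, b) = S e a b) :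
    (∀ e : E, IsUnit (S e)) ∧ Sm * Fm = 0 := by
  refine ⟨Function.forall_of_iterate_eq htree (hS0 ▸ hS1) fun e he hpar => ?_, ?_⟩
  · rw [hSrec e he]
    exact (hpar.mul (Matrix.isUnit_nonsing_inv_iff.mpr (hA e))).neg
  have hcolumn_blocks : ∀ f c (e : {e : E // e ≠ e₀}) b, Fm (f, c) (e, b) =
      (if f = par e then 1 else if f = e then A e else 0) c b := by
    intro f c e b
    simp only [hFm, apply_ite (fun M : Matrix (Fin s) (Fin s) F => M c b), Matrix.one_apply,
      Matrix.zero_apply]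
  have hcolumn_eq_zero : ∀ e, e ≠ e₀ → S (par e) + S e * A e = 0 := fun e he => by
    rw [hSrec e he, neg_mul, mul_assoc,
      Matrix.nonsing_inv_mul _ ((Matrix.isUnit_iff_isUnit_det _).mp (hA e)), mul_one,
      add_neg_cancel]
  ext a ⟨e, b⟩
  obtain ⟨k, hk⟩ := htree e
  rw [Matrix.mul_apply_prod_of_blocks hSm hcolumn_blocks,
    Finset.sum_mul_ite_ite_eq S (Function.apply_ne_of_iterate_eq hk e.2),
    hcolumn_eq_zero e e.2, Matrix.zero_apply, Matrix.zero_apply]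

/-- Tree-PIN alignment construction. Edges are indexed by `E` with root
edge `e₀` (the edge at the root leaf ρ); `par e` is the adjacent edge `e^#` on the
unique path from `e` toward ρ (with `par e₀ = e₀`), and iterating `par` from any edge
reaches `e₀` (tree property). Given invertible matrices `A_e` (the communication
coefficients `A_{i*(e),e}`), an invertible `S₁`, and `S` defined by `S e₀ = S₁` and
`S e = −S_{e^#} · A_e⁻¹` for `e ≠ e₀`, the row-block vector `S` satisfies `S·F = 0`
for the tree communication matrix `F` (column block of a non-root edge `e` carrying
the identity at row-block `e^#` and `A_e` at row-block `e`), and every `S_e` is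
invertible. -/
theorem tree_pin_alignment {F : Type*} [Field F] {s : ℕ} {E : Type*}
    [Fintype E] [DecidableEq E]
    (e₀ : E) (par : E → E) (hpar0 : par e₀ = e₀)
    (htree : ∀ e : E, ∃ k : ℕ, par^[k] e = e₀)
    (A : E → Matrix (Fin s) (Fin s) F) (hA : ∀ e, IsUnit (A e))
    (S1 : Matrix (Fin s) (Fin s) F) (hS1 : IsUnit S1)
    (S : E → Matrix (Fin s) (Fin s) F)
    (hS0 : S e₀ = S1)
    (hSrec : ∀ e : E, e ≠ e₀ → S e = -(S (par e) * (A e)⁻¹))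
    (Fm : Matrix (E × Fin s) ({e : E // e ≠ e₀} × Fin s) F)
    (hFm : ∀ (f : E) (a : Fin s) (e : {e : E // e ≠ e₀}) (b : Fin s),
      Fm (f, a) (e, b) =
        if f = par e.1 then (if a = b then 1 else 0)
        else if f = e.1 then A e.1 a b else 0)
    (Sm : Matrix (Fin s) (E × Fin s) F)
    (hSm : ∀ (a : Fin s) (e : E) (b : Fin s), Sm a (e, b) = S e a b) :
    (∀ e : E, IsUnit (S e)) ∧ Sm * Fm = 0 :=
  tree_pin_alignment_general e₀ par htree A hA S1 hS1 S hS0 hSrec Fm hFm Sm hSm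
end
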